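/- Let (V,d,b) be an acyclic information network, let A, Â ⊆ V\{d} be disjoint transient and permanent initial sets, let v be a non-void node and 1 ≤ t ≤ T. Then E[X^t_v(A,Â)] = ∑_{u ∈ A ∪ Â} (M_Â^t) v u, where M_Â is the absorbing modification of b; equivalently, the probability that v is active at time t equals the probability that a random walk with transition matrix b started at v either visits Â at some time ≤ t, or is in A at time t. -/

import Mathlib

open MeasureTheory

/-- An information network: a finite node set `V` with a distinguished void node `d`
and a row-stochastic weight matrix `b` with entries in `[0,1]` and `b d d = 1`. -/
structure InfoNetwork (V : Type*) [Fintype V] where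
  d : V
  b : V → V → ℝ
  b_nonneg : ∀ v u, 0 ≤ b v u
  b_le_one : ∀ v u, b v u ≤ 1
  row_sum : ∀ v, ∑ u, b v u = 1
  void_loop : b d d = 1

/-- The uniform probability measure on the interval `(0,1)`. -/
noncomputable def unifMeasure : Measure ℝ := volume.restrict (Set.Ioo (0:ℝ) 1)

/-- Product over `V` of uniform measures on `(0,1)`: the distribution of the thresholds. -/
noncomputable def thresholdMeasure (V : Type*) [Fintype V] : Measure (V → ℝ) :=
  Measure.pi fun _ : V => unifMeasure

namespace InfoNetwork

variable {V : Type*} [Fintype V]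

/-- The set of active nodes at time `t` under the non-progressive linear threshold model,
with transient initial set `A`, permanent initial set `Ahat` and thresholds `θ`. -/
noncomputable def activeSet (N : InfoNetwork V) (A Ahat : Set V) (θ : V → ℝ) : ℕ → Set V
  | 0 => A ∪ Ahat
  | t+1 => Ahat ∪
      {v | v ∉ Ahat ∧ θ v ≤ ∑ u, (N.activeSet A Ahat θ t).indicator (N.b v) u}

/-- `E[X^t_v(A,Ahat)]`: the probability (over the random thresholds) that `v` is active
at time `t`. -/
noncomputable def EX (N : InfoNetwork V) (A Ahat : Set V) (t : ℕ) (v : V) : ℝ :=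
  (thresholdMeasure V {θ | v ∈ N.activeSet A Ahat θ t}).toReal

/-- The expected influence over the period `[1,T]`. -/
noncomputable def sigmaBar (N : InfoNetwork V) (T : ℕ) (A Ahat : Set V) : ℝ :=
  (1 / (T : ℝ)) * ∑ t ∈ Finset.Icc 1 T, ∑ v, N.EX A Ahat t v

/-- The edge relation of the directed graph on `V \ {d}`. -/
def edgeRel (N : InfoNetwork V) (v u : V) : Prop :=
  v ≠ N.d ∧ u ≠ N.d ∧ 0 < N.b v u

/-- The network is acyclic if the directed graph on `V \ {d}` has no directed cycle. -/
def Acyclic (N : InfoNetwork V) : Prop :=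
  ∀ v, ¬ Relation.TransGen N.edgeRel v v

end InfoNetwork

/-- A real-valued set function `f` is submodular on the ground set `S`. -/
def SubmodularOn {V : Type*} (S : Set V) (f : Set V → ℝ) : Prop :=
  ∀ A B : Set V, A ⊆ B → B ⊆ S → ∀ w ∈ S, w ∉ B →
    f (insert w B) - f B ≤ f (insert w A) - f A

open scoped Classical in
/-- The absorbing modification `M_Â` of `b`: row `v` equals row `v` of `b` when `v ∉ Ahat`
and equals the standard basis row `e_v` when `v ∈ Ahat`. -/
noncomputable def absorbing {V : Type*} [Fintype V] [DecidableEq V] (N : InfoNetwork V)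
    (Ahat : Set V) : Matrix V V ℝ :=
  Matrix.of fun v u => if v ∈ Ahat then (if u = v then 1 else 0) else N.b v u

/-!
Call `∑ u, b v u · [u active at t]` the active weight of `v` at time `t`. The states at time `t`
depend only on the thresholds of nodes reachable from them, so in an acyclic network the active
weight of `v ≠ d` does not depend on `θ v`. Integrating out the uniform coordinate `θ v` first,
`P(θ v ≤ weight) = E[weight] = ∑ u, b v u · P(u active at t)`: for `v ∉ Â` this is the one-step
recursion of the walk with matrix `M_Â`. The nodes of `Â` and the void node have identity rows in
`M_Â`; the former are always active, and the latter (`b d = e_d`, `0 < θ d < 1` almost surely)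
keeps its initial state.
-/

namespace Matrix

variable {ι R : Type*} [Fintype ι] [DecidableEq ι] [Semiring R]

lemma pow_row_eq_one_row {M : Matrix ι ι R} {i : ι} (h : M i = (1 : Matrix ι ι R) i) (t : ℕ) :
    (M ^ t) i = (1 : Matrix ι ι R) i := by
  induction t with
  | zero => rw [pow_zero]
  | succ t ih =>
    ext j
    simp only [pow_succ', mul_apply, h]
    rw [← mul_apply, one_mul, ih]

lemma sum_indicator_one_row (S : Set ι) (i : ι) :
    ∑ j, S.indicator ((1 : Matrix ι ι R) i) j = S.indicator 1 i := by
  classical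
  rw [Finset.sum_eq_single i (fun j _ hj => by simp [Set.indicator_apply, one_apply_ne' hj])
    (by simp)]
  simp [Set.indicator_apply]

lemma sum_indicator_pow_succ_row (M : Matrix ι ι R) (S : Set ι) (t : ℕ) (i : ι) :
    ∑ j, S.indicator ((M ^ (t + 1)) i) j = ∑ k, M i k * ∑ j, S.indicator ((M ^ t) k) j := by
  classical
  simp only [pow_succ', mul_apply, Set.indicator_apply, Finset.mul_sum]
  rw [Finset.sum_comm]
  refine Finset.sum_congr rfl fun j _ => ?_
  split_ifs <;> simp

end Matrix

instance : IsProbabilityMeasure unifMeasure :=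
  ⟨by simp [unifMeasure]⟩

instance (V : Type*) [Fintype V] : IsProbabilityMeasure (thresholdMeasure V) := by
  unfold thresholdMeasure; infer_instance

lemma unifMeasure_Iic {s : ℝ} (hs : s ≤ 1) :
    unifMeasure (Set.Iic s) = ENNReal.ofReal s := by
  rw [unifMeasure, Measure.restrict_congr_set Ioo_ae_eq_Ioc,
    Measure.restrict_apply measurableSet_Iic, Set.inter_comm, Set.Ioc_inter_Iic,
    inf_eq_right.mpr hs, Real.volume_Ioc, sub_zero]

lemma ae_thresholdMeasure_mem_Ioo {V : Type*} [Fintype V] (v : V) :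
    ∀ᵐ θ ∂thresholdMeasure V, θ v ∈ Set.Ioo 0 1 :=
  Measure.tendsto_eval_ae_ae.eventually (ae_restrict_mem measurableSet_Ioo)

lemma thresholdMeasure_le_eq_lintegral {V : Type*} [Fintype V] (v : V) {S : (V → ℝ) → ℝ}
    (hS : Measurable S) (h1 : ∀ θ, S θ ≤ 1)
    (hindep : ∀ θ θ', (∀ w, w ≠ v → θ w = θ' w) → S θ = S θ') :
    thresholdMeasure V {θ | θ v ≤ S θ} = ∫⁻ θ, ENNReal.ofReal (S θ) ∂thresholdMeasure V := by
  classical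
  have hE : MeasurableSet {θ : V → ℝ | θ v ≤ S θ} := measurableSet_le (measurable_pi_apply v) hS
  have hupdate : ∀ θ x, S (Function.update θ v x) = S θ := fun θ x =>
    hindep _ _ fun w hw => Function.update_of_ne hw x θ
  rw [← lintegral_indicator_one hE, thresholdMeasure]
  refine lintegral_eq_of_lmarginal_eq {v} (measurable_const.indicator hE)
    (ENNReal.measurable_ofReal.comp hS) ?_
  ext θ
  have hslice : (fun x => {θ : V → ℝ | θ v ≤ S θ}.indicator 1 (Function.update θ v x))
      = (Set.Iic (S θ)).indicator (1 : ℝ → ENNReal) := by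
    ext x
    simp [Set.indicator_apply, hupdate]
  simp only [lmarginal_singleton, hslice, hupdate, lintegral_indicator_one measurableSet_Iic,
    unifMeasure_Iic (h1 θ), lintegral_const, measure_univ, mul_one]

lemma thresholdMeasure_real_le_eq_integral {V : Type*} [Fintype V] (v : V) {S : (V → ℝ) → ℝ}
    (hS : Measurable S) (h0 : ∀ θ, 0 ≤ S θ) (h1 : ∀ θ, S θ ≤ 1)
    (hindep : ∀ θ θ', (∀ w, w ≠ v → θ w = θ' w) → S θ = S θ') :
    (thresholdMeasure V).real {θ | θ v ≤ S θ} = ∫ θ, S θ ∂thresholdMeasure V := by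
  rw [measureReal_def, thresholdMeasure_le_eq_lintegral v hS h1 hindep,
    integral_eq_lintegral_of_nonneg_ae (Filter.Eventually.of_forall h0) hS.aestronglyMeasurable]

namespace InfoNetwork

variable {V : Type*} [Fintype V] (N : InfoNetwork V)

def Reaches : V → V → Prop := Relation.ReflTransGen fun a c => 0 < N.b a c

variable {N}

lemma b_void_of_ne {x : V} (hx : x ≠ N.d) : N.b N.d x = 0 := by
  classical
  have hrest : ∑ u ∈ Finset.univ.erase N.d, N.b N.d u = 0 := by
    have := N.row_sum N.d
    rw [← Finset.add_sum_erase _ _ (Finset.mem_univ N.d), N.void_loop] at this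
    linarith
  exact (Finset.sum_eq_zero_iff_of_nonneg fun u _ => N.b_nonneg N.d u).mp hrest x
    (Finset.mem_erase.mpr ⟨hx, Finset.mem_univ x⟩)

lemma b_void [DecidableEq V] : N.b N.d = (1 : Matrix V V ℝ) N.d := by
  ext x
  rcases eq_or_ne x N.d with rfl | hx
  · simp [N.void_loop]
  · simp [b_void_of_ne hx, Matrix.one_apply_ne' hx]

lemma eq_void_of_reaches_void {w : V} (h : N.Reaches N.d w) : w = N.d := by
  induction h with
  | refl => rfl
  | tail _ hpos ih =>
    subst ih
    by_contra hne
    exact hpos.ne' (b_void_of_ne hne)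

lemma Reaches.reflTransGen_edgeRel {u w : V} (h : N.Reaches u w) (hw : w ≠ N.d) :
    Relation.ReflTransGen N.edgeRel u w := by
  induction h with
  | refl => exact .refl
  | @tail b c _ hpos ih =>
    have hb : b ≠ N.d := by
      rintro rfl
      exact hpos.ne' (b_void_of_ne hw)
    exact (ih hb).tail ⟨hb, hw, hpos⟩

lemma Acyclic.not_reaches_of_pos (hacyc : N.Acyclic) {v u : V} (hv : v ≠ N.d)
    (hvu : 0 < N.b v u) : ¬ N.Reaches u v := by
  intro h
  have hu : u ≠ N.d := by
    rintro rfl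
    exact hv (eq_void_of_reaches_void h)
  exact hacyc v (.head' ⟨hv, hu, hvu⟩ (h.reflTransGen_edgeRel hv))

variable (N)

noncomputable def activeWeight (A Ahat : Set V) (θ : V → ℝ) (t : ℕ) (v : V) : ℝ :=
  ∑ u, (N.activeSet A Ahat θ t).indicator (N.b v) u

variable {A Ahat : Set V} {θ θ' : V → ℝ} {t : ℕ} {v : V}

lemma mem_activeSet_succ :
    v ∈ N.activeSet A Ahat θ (t + 1) ↔ v ∈ Ahat ∨ θ v ≤ N.activeWeight A Ahat θ t v := by
  by_cases hv : v ∈ Ahat <;> simp [activeSet, activeWeight, hv]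

lemma mem_activeSet_of_mem_Ahat (hv : v ∈ Ahat) : v ∈ N.activeSet A Ahat θ t := by
  cases t with
  | zero => exact Or.inr hv
  | succ t => exact (N.mem_activeSet_succ).mpr (Or.inl hv)

lemma activeWeight_nonneg : 0 ≤ N.activeWeight A Ahat θ t v :=
  Finset.sum_nonneg fun u _ => Set.indicator_nonneg (fun x _ => N.b_nonneg v x) u

lemma activeWeight_le_one : N.activeWeight A Ahat θ t v ≤ 1 :=
  (Finset.sum_le_sum fun u _ => Set.indicator_le_self' (fun x _ => N.b_nonneg v x) u).trans
    (N.row_sum v).le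

lemma activeWeight_congr
    (h : ∀ u, 0 < N.b v u → (u ∈ N.activeSet A Ahat θ t ↔ u ∈ N.activeSet A Ahat θ' t)) :
    N.activeWeight A Ahat θ t v = N.activeWeight A Ahat θ' t v := by
  classical
  refine Finset.sum_congr rfl fun u _ => ?_
  rcases (N.b_nonneg v u).lt_or_eq with hpos | hzero
  · simp [Set.indicator_apply, h u hpos]
  · simp [Set.indicator_apply, ← hzero]

lemma mem_activeSet_congr (h : ∀ w, N.Reaches v w → θ w = θ' w) :
    v ∈ N.activeSet A Ahat θ t ↔ v ∈ N.activeSet A Ahat θ' t := by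
  induction t generalizing v with
  | zero => rfl
  | succ t ih =>
    have hweight : N.activeWeight A Ahat θ t v = N.activeWeight A Ahat θ' t v :=
      N.activeWeight_congr fun u hpos => ih fun w hw => h w (.head hpos hw)
    rw [mem_activeSet_succ, mem_activeSet_succ, hweight, h v .refl]

lemma activeWeight_eq_of_forall_ne (hacyc : N.Acyclic) (hv : v ≠ N.d)
    (h : ∀ w, w ≠ v → θ w = θ' w) :
    N.activeWeight A Ahat θ t v = N.activeWeight A Ahat θ' t v :=
  N.activeWeight_congr fun _ hpos => N.mem_activeSet_congr fun w hw =>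
    h w fun hwv => hacyc.not_reaches_of_pos hv hpos (hwv ▸ hw)

lemma activeWeight_eq_sum_indicator :
    N.activeWeight A Ahat θ t v =
      ∑ u, {θ | u ∈ N.activeSet A Ahat θ t}.indicator (fun _ => N.b v u) θ := by
  classical
  simp [activeWeight, Set.indicator_apply]

lemma measurable_activeWeight
    (h : ∀ u, MeasurableSet {θ : V → ℝ | u ∈ N.activeSet A Ahat θ t}) :
    Measurable fun θ => N.activeWeight A Ahat θ t v := by
  simp only [activeWeight_eq_sum_indicator]
  exact Finset.measurable_sum _ fun u _ => measurable_const.indicator (h u)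

lemma measurableSet_setOf_mem_activeSet (t : ℕ) (v : V) :
    MeasurableSet {θ : V → ℝ | v ∈ N.activeSet A Ahat θ t} := by
  induction t generalizing v with
  | zero => exact MeasurableSet.const _
  | succ t ih =>
    simp only [mem_activeSet_succ, Set.ofPred_or]
    exact (MeasurableSet.const _).union
      (measurableSet_le (measurable_pi_apply v) (N.measurable_activeWeight ih))

variable {N}

lemma EX_zero : N.EX A Ahat 0 v = (A ∪ Ahat).indicator 1 v := by
  by_cases hv : v ∈ A ∪ Ahat <;> simp [EX, activeSet, hv]

lemma EX_of_mem_Ahat (hv : v ∈ Ahat) : N.EX A Ahat t v = 1 := by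
  simp [EX, N.mem_activeSet_of_mem_Ahat hv]

lemma EX_succ (hacyc : N.Acyclic) (hv : v ≠ N.d) (hvA : v ∉ Ahat) :
    N.EX A Ahat (t + 1) v = ∑ u, N.b v u * N.EX A Ahat t u := by
  have hset : {θ | v ∈ N.activeSet A Ahat θ (t + 1)} =
      {θ | θ v ≤ N.activeWeight A Ahat θ t v} := by
    ext θ
    simp [mem_activeSet_succ, hvA]
  rw [EX, ← measureReal_def, hset, thresholdMeasure_real_le_eq_integral v
    (N.measurable_activeWeight (N.measurableSet_setOf_mem_activeSet t))
    (fun _ => N.activeWeight_nonneg) (fun _ => N.activeWeight_le_one)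
    (fun _ _ h => N.activeWeight_eq_of_forall_ne hacyc hv h)]
  simp only [activeWeight_eq_sum_indicator]
  rw [integral_finsetSum _ fun u _ =>
    (integrable_const _).indicator (N.measurableSet_setOf_mem_activeSet t u)]
  refine Finset.sum_congr rfl fun u _ => ?_
  rw [integral_indicator_const _ (N.measurableSet_setOf_mem_activeSet t u), smul_eq_mul,
    mul_comm, EX, measureReal_def]

lemma mem_activeSet_void_iff {θ : V → ℝ} (hθ : θ N.d ∈ Set.Ioo 0 1) :
    N.d ∈ N.activeSet A Ahat θ t ↔ N.d ∈ A ∪ Ahat := by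
  classical
  induction t with
  | zero => rfl
  | succ t ih =>
    have hweight :
        N.activeWeight A Ahat θ t N.d = (N.activeSet A Ahat θ t).indicator 1 N.d := by
      rw [activeWeight, b_void, Matrix.sum_indicator_one_row]
    by_cases hact : N.d ∈ N.activeSet A Ahat θ t
    · simp only [mem_activeSet_succ, hweight, Set.indicator_of_mem hact, Pi.one_apply, hθ.2.le,
        or_true, true_iff]
      exact ih.mp hact
    · have hAhat : N.d ∉ Ahat := fun h => hact (ih.mpr (Or.inr h))
      simp only [mem_activeSet_succ, hweight, Set.indicator_of_notMem hact, not_le.mpr hθ.1,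
        hAhat, or_false, false_iff]
      exact fun h => hact (ih.mpr h)

lemma EX_void : N.EX A Ahat t N.d = (A ∪ Ahat).indicator 1 N.d := by
  have hae : {θ | N.d ∈ N.activeSet A Ahat θ t} =ᵐ[thresholdMeasure V] {θ | N.d ∈ A ∪ Ahat} :=
    Filter.eventuallyEq_set.mpr <| (ae_thresholdMeasure_mem_Ioo N.d).mono fun θ hθ =>
      mem_activeSet_void_iff hθ
  rw [EX, ← measureReal_def, measureReal_congr hae]
  by_cases hd : N.d ∈ A ∪ Ahat <;> simp [hd]

end InfoNetwork

section Absorbing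

variable {V : Type*} [Fintype V] [DecidableEq V] {N : InfoNetwork V} {Ahat : Set V} {v : V}

lemma absorbing_row_of_mem (hv : v ∈ Ahat) : absorbing N Ahat v = (1 : Matrix V V ℝ) v := by
  ext u
  simp [absorbing, hv, Matrix.one_apply, eq_comm]

lemma absorbing_row_of_notMem (hv : v ∉ Ahat) : absorbing N Ahat v = N.b v := by
  ext u
  simp [absorbing, hv]

lemma absorbing_row_void : absorbing N Ahat N.d = (1 : Matrix V V ℝ) N.d := by
  by_cases hd : N.d ∈ Ahat
  · exact absorbing_row_of_mem hd
  · rw [absorbing_row_of_notMem hd, N.b_void]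

end Absorbing

theorem EX_eq_absorbing_walk_general {V : Type*} [Fintype V] [DecidableEq V] (N : InfoNetwork V)
    (hacyc : N.Acyclic) (A Ahat : Set V) (t : ℕ) (v : V) :
    N.EX A Ahat t v = ∑ u : V, (A ∪ Ahat).indicator ((absorbing N Ahat ^ t) v) u := by
  induction t generalizing v with
  | zero => rw [InfoNetwork.EX_zero, pow_zero, Matrix.sum_indicator_one_row]
  | succ t ih =>
    by_cases hvAhat : v ∈ Ahat
    · rw [InfoNetwork.EX_of_mem_Ahat hvAhat,
        Matrix.pow_row_eq_one_row (absorbing_row_of_mem hvAhat), Matrix.sum_indicator_one_row,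
        Set.indicator_of_mem (Set.mem_union_right A hvAhat), Pi.one_apply]
    by_cases hvd : v = N.d
    · rw [hvd, InfoNetwork.EX_void, Matrix.pow_row_eq_one_row absorbing_row_void,
        Matrix.sum_indicator_one_row]
    rw [InfoNetwork.EX_succ hacyc hvd hvAhat, Matrix.sum_indicator_pow_succ_row,
      absorbing_row_of_notMem hvAhat]
    simp only [ih]

/-- in an acyclic network with disjoint transient and permanent initial sets
`A` and `Ahat`, for a non-void node `v` and a time `1 ≤ t ≤ T`,
`E[X^t_v(A,Ahat)] = ∑_{u ∈ A ∪ Ahat} (M_Ahat^t) v u`: the probability that `v` is active at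
time `t` equals the probability that a random walk with transition matrix `b` started at `v`
either visits `Ahat` at some time `≤ t`, or is in `A` at time `t`. -/
theorem EX_eq_absorbing_walk {V : Type*} [Fintype V] [DecidableEq V] (N : InfoNetwork V)
    (hacyc : N.Acyclic) (A Ahat : Set V)
    (hA : A ⊆ {x : V | x ≠ N.d}) (hAhat : Ahat ⊆ {x : V | x ≠ N.d})
    (hdisj : Disjoint A Ahat)
    (T : ℕ) (t : ℕ) (ht1 : 1 ≤ t) (htT : t ≤ T) (v : V) (hv : v ≠ N.d) :
    N.EX A Ahat t v = ∑ u : V, (A ∪ Ahat).indicator ((absorbing N Ahat ^ t) v) u :=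
  EX_eq_absorbing_walk_general N hacyc A Ahat t v
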